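/- arXiv:1210.4232 — 2 statements merged into one kernel-verified Lean document; each statement's English description precedes it below -/
import Mathlib

section
/- Let W be a finite subset of Z^d (d ≥ 1) with even part W^E and odd part W^O satisfying W^O = ∂_ext(W^E) and W^E = {y even : ∂y ⊆ W^O}. Then the edge boundary of W satisfies |∇(W)| = 2d(|W^O| - |W^E|). -/
/-- Nearest-neighbor adjacency on `ℤ^d`. -/
def adjZ {d : ℕ} (x y : Fin d → ℤ) : Prop :=
  ∃ i, (y i = x i + 1 ∨ y i = x i - 1) ∧ ∀ j, j ≠ i → y j = x j

/-- External vertex boundary of `X ⊆ ℤ^d`. -/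
def extBdryZ {d : ℕ} (X : Set (Fin d → ℤ)) : Set (Fin d → ℤ) :=
  {y | y ∉ X ∧ ∃ x, x ∈ X ∧ adjZ y x}

/-- The edge boundary `∇(W)` of `W ⊆ ℤ^d`, recorded as ordered pairs with
first coordinate inside `W` and second coordinate outside (so each boundary
edge is counted exactly once). -/
def edgeBdryZ {d : ℕ} (W : Set (Fin d → ℤ)) :
    Set ((Fin d → ℤ) × (Fin d → ℤ)) :=
  {p | p.1 ∈ W ∧ p.2 ∉ W ∧ adjZ p.1 p.2}

noncomputable def nbrZ {d : ℕ} (x : Fin d → ℤ) : Finset (Fin d → ℤ) :=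
  Finset.image (fun p : Fin d × Bool =>
    Function.update x p.1 (x p.1 + if p.2 then 1 else -1)) Finset.univ

lemma mem_nbrZ {d : ℕ} {x u : Fin d → ℤ} : u ∈ nbrZ x ↔ adjZ x u := by
  constructor
  · rintro h
    simp only [nbrZ, Finset.mem_image, Finset.mem_univ, true_and] at h
    obtain ⟨⟨i, b⟩, rfl⟩ := h
    refine ⟨i, ?_, ?_⟩
    · cases b <;> simp [Function.update_self, sub_eq_add_neg]
    · intro j hj; simp [Function.update_of_ne hj]
  · rintro ⟨i, hi, hj⟩
    simp only [nbrZ, Finset.mem_image, Finset.mem_univ, true_and]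
    refine ⟨⟨i, if u i = x i + 1 then true else false⟩, ?_⟩
    funext j
    rcases eq_or_ne j i with rfl | hji
    · simp only [Function.update_self]
      rcases hi with h1 | h1 <;> simp [h1] <;> split <;> omega
    · simp [Function.update_of_ne hji, hj j hji]

lemma card_nbrZ {d : ℕ} (x : Fin d → ℤ) : (nbrZ x).card = 2 * d := by
  rw [nbrZ, Finset.card_image_of_injective _ ?_, Finset.card_univ]
  · simp [Fintype.card_prod, mul_comm]
  · rintro ⟨i, b⟩ ⟨j, c⟩ h
    simp only at h
    have hij : i = j := by
      by_contra hne
      have := congrFun h i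
      simp only [Function.update_self, Function.update_of_ne hne] at this
      split at this <;> omega
    subst hij
    have := congrFun h i
    simp only [Function.update_self, add_right_inj] at this
    rcases b with _ | _ <;> rcases c with _ | _ <;> simp_all <;> omega

lemma adjZ_symm {d : ℕ} {x y : Fin d → ℤ} (h : adjZ x y) : adjZ y x := by
  obtain ⟨i, hi, hj⟩ := h
  refine ⟨i, ?_, fun j hji => (hj j hji).symm⟩
  rcases hi with h1 | h1 <;> [right; left] <;> omega

lemma adjZ_sum {d : ℕ} {x y : Fin d → ℤ} (h : adjZ x y) :
    (∑ i, y i) = (∑ i, x i) + 1 ∨ (∑ i, y i) = (∑ i, x i) - 1 := by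
  obtain ⟨i, hi, hj⟩ := h
  have hx : ∑ j, x j = x i + ∑ j ∈ Finset.univ.erase i, x j :=
    (Finset.add_sum_erase _ _ (Finset.mem_univ i)).symm
  have hy : ∑ j, y j = y i + ∑ j ∈ Finset.univ.erase i, y j :=
    (Finset.add_sum_erase _ _ (Finset.mem_univ i)).symm
  have hrest : ∑ j ∈ Finset.univ.erase i, y j = ∑ j ∈ Finset.univ.erase i, x j :=
    Finset.sum_congr rfl fun j hjm => hj j (Finset.mem_erase.mp hjm).1
  rw [hy, hrest, hx]
  omega

lemma adjZ_parity {d : ℕ} {x y : Fin d → ℤ} (h : adjZ x y) :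
    Even (∑ i, y i) ↔ ¬ Even (∑ i, x i) := by
  have := adjZ_sum h
  rw [Int.even_iff, Int.even_iff]
  omega


/-- Let `W` be a finite subset of `ℤ^d` (`d ≥ 1`) whose even part `W^E` and
odd part `W^O` (by parity of coordinate sum) satisfy `W^O = ∂_ext(W^E)` and
`W^E = {y even : ∂y ⊆ W^O}`. Then `|∇(W)| = 2d(|W^O| - |W^E|)`. -/
theorem edge_boundary_card_eq {d : ℕ} (hd : 1 ≤ d) (W : Set (Fin d → ℤ))
    (hWfin : W.Finite)
    (hO : W ∩ {x | ¬ Even (∑ i, x i)} = extBdryZ (W ∩ {x | Even (∑ i, x i)}))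
    (hE : W ∩ {x | Even (∑ i, x i)} =
      {y | Even (∑ i, y i) ∧ ∀ u, adjZ y u → u ∈ W ∩ {x | ¬ Even (∑ i, x i)}}) :
    ((edgeBdryZ W).ncard : ℤ) =
      2 * d * (((W ∩ {x | ¬ Even (∑ i, x i)}).ncard : ℤ) -
        ((W ∩ {x | Even (∑ i, x i)}).ncard : ℤ)) := by
  classical
  set Wf := hWfin.toFinset with hWf
  have memWf : ∀ x, x ∈ Wf ↔ x ∈ W := fun x => hWfin.mem_toFinset
  set Of := Wf.filter (fun x => ¬ Even (∑ i, x i)) with hOf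
  set Ef := Wf.filter (fun x => Even (∑ i, x i)) with hEf
  have hOset : (↑Of : Set (Fin d → ℤ)) = W ∩ {x | ¬ Even (∑ i, x i)} := by
    ext x; simp [hOf, memWf, Set.mem_inter_iff]
  have hEset : (↑Ef : Set (Fin d → ℤ)) = W ∩ {x | Even (∑ i, x i)} := by
    ext x; simp [hEf, memWf, Set.mem_inter_iff]
  -- key consequence of hE : all neighbors of a vertex of Ef lie in Of
  have hEnbr : ∀ u ∈ Ef, ∀ v, adjZ u v → v ∈ Of := by
    intro u hu v hv
    have hu' : u ∈ W ∩ {x | Even (∑ i, x i)} := by rw [← hEset]; exact_mod_cast hu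
    rw [hE] at hu'
    have := hu'.2 v hv
    rw [← hOset] at this
    exact_mod_cast this
  -- the edge boundary as a finset
  set F : Finset ((Fin d → ℤ) × (Fin d → ℤ)) :=
    Of.biUnion (fun w => ((nbrZ w) \ Wf).image (fun u => (w, u))) with hF
  have hFset : edgeBdryZ W = (↑F : Set _) := by
    ext ⟨a, b⟩
    simp only [edgeBdryZ, Set.mem_setOf_eq, hF, Finset.coe_biUnion, Set.mem_iUnion,
      Finset.mem_coe, Finset.mem_image, Finset.mem_sdiff, Prod.mk.injEq]
    constructor
    · rintro ⟨haW, hbW, hab⟩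
      have haO : a ∈ Of := by
        rw [hOf, Finset.mem_filter, memWf]
        refine ⟨haW, ?_⟩
        intro hev
        have : a ∈ Ef := by rw [hEf, Finset.mem_filter, memWf]; exact ⟨haW, hev⟩
        have := hEnbr a this b hab
        rw [hOf, Finset.mem_filter, memWf] at this
        exact hbW this.1
      exact ⟨a, haO, b, ⟨mem_nbrZ.mpr hab, by rw [memWf]; exact hbW⟩, rfl, rfl⟩
    · rintro ⟨w, hw, u, ⟨hu1, hu2⟩, rfl, rfl⟩
      rw [hOf, Finset.mem_filter, memWf] at hw
      exact ⟨hw.1, by rw [memWf] at hu2; exact hu2, mem_nbrZ.mp hu1⟩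
  -- for w odd, neighbors of w in Wf are exactly those in Ef
  have hinter : ∀ w ∈ Of, nbrZ w ∩ Wf = nbrZ w ∩ Ef := by
    intro w hw
    rw [hOf, Finset.mem_filter] at hw
    ext u
    simp only [Finset.mem_inter, hEf, Finset.mem_filter, and_congr_right_iff]
    intro hu
    have hpar : Even (∑ i, u i) := by
      rw [adjZ_parity (mem_nbrZ.mp hu)]; exact hw.2
    constructor
    · exact fun h => ⟨h, hpar⟩
    · exact fun h => h.1
  -- counting: F.card + (edges between Of and Ef) = 2 d |Of|
  have key1 : F.card + (∑ w ∈ Of, (nbrZ w ∩ Ef).card) = 2 * d * Of.card := by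
    have hdisj : ∀ w₁ ∈ Of, ∀ w₂ ∈ Of, w₁ ≠ w₂ →
        Disjoint (((nbrZ w₁) \ Wf).image (fun u => (w₁, u)))
          (((nbrZ w₂) \ Wf).image (fun u => (w₂, u))) := by
      intro w₁ _ w₂ _ hne
      rw [Finset.disjoint_left]
      rintro ⟨a, b⟩ h1 h2
      simp only [Finset.mem_image, Prod.mk.injEq] at h1 h2
      obtain ⟨_, _, rfl, _⟩ := h1
      obtain ⟨_, _, h, _⟩ := h2
      exact hne h.symm
    rw [hF, Finset.card_biUnion hdisj]
    have : ∀ w ∈ Of, (((nbrZ w) \ Wf).image (fun u => (w, u))).card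
        = ((nbrZ w) \ Wf).card := by
      intro w _
      exact Finset.card_image_of_injective _ (fun a b h => (Prod.mk.injEq _ _ _ _ ▸ h : _ ∧ _).2)
    rw [Finset.sum_congr rfl this, ← Finset.sum_add_distrib]
    have hterm : ∀ w ∈ Of, (nbrZ w \ Wf).card + (nbrZ w ∩ Ef).card = 2 * d := by
      intro w hw
      rw [← hinter w hw, Finset.card_sdiff_add_card_inter, card_nbrZ]
    rw [Finset.sum_congr rfl hterm, Finset.sum_const, smul_eq_mul, mul_comm]
  -- double counting: edges between Of and Ef
  have key2 : (∑ w ∈ Of, (nbrZ w ∩ Ef).card) = 2 * d * Ef.card := by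
    have h1 : ∀ w, nbrZ w ∩ Ef = Ef.filter (fun u => adjZ w u) := by
      intro w; ext u
      simp [Finset.mem_inter, Finset.mem_filter, mem_nbrZ, and_comm]
    have h2 : ∀ u, nbrZ u ∩ Of = Of.filter (fun w => adjZ u w) := by
      intro u; ext w
      simp [Finset.mem_inter, Finset.mem_filter, mem_nbrZ, and_comm]
    calc (∑ w ∈ Of, (nbrZ w ∩ Ef).card)
        = ∑ w ∈ Of, ∑ u ∈ Ef, (if adjZ w u then 1 else 0) := by
          refine Finset.sum_congr rfl fun w _ => ?_
          rw [h1 w, Finset.card_filter]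
      _ = ∑ u ∈ Ef, ∑ w ∈ Of, (if adjZ w u then 1 else 0) := Finset.sum_comm
      _ = ∑ u ∈ Ef, (nbrZ u ∩ Of).card := by
          refine Finset.sum_congr rfl fun u _ => ?_
          rw [h2 u, Finset.card_filter]
          refine Finset.sum_congr rfl fun w _ => ?_
          by_cases h : adjZ w u
          · simp [h, adjZ_symm h]
          · have : ¬ adjZ u w := fun h' => h (adjZ_symm h')
            simp [h, this]
      _ = ∑ u ∈ Ef, 2 * d := by
          refine Finset.sum_congr rfl fun u hu => ?_
          have hsub : nbrZ u ⊆ Of := fun v hv => hEnbr u hu v (mem_nbrZ.mp hv)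
          rw [Finset.inter_eq_left.mpr hsub, card_nbrZ]
      _ = 2 * d * Ef.card := by rw [Finset.sum_const, smul_eq_mul, mul_comm]
  -- conclude
  rw [hFset, Set.ncard_coe_finset, ← hOset, ← hEset, Set.ncard_coe_finset,
    Set.ncard_coe_finset]
  have := congrArg (Nat.cast : ℕ → ℤ) key1
  have := congrArg (Nat.cast : ℕ → ℤ) key2
  push_cast at *
  linarith
end

section
/- Let A ⊆ E and B ⊆ O be finite subsets of the lattice Z^d with B = ∂_ext A and A = {v ∈ E : ∂v ⊆ B}, where A is nonempty. Then |B| ≥ |A| + 1; in particular B is strictly larger than A. -/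
/-- Weak deficiency bound: let `A ⊆ E` (even vertices) be a nonempty finite
subset of `ℤ^d` and `B ⊆ O` with `B = ∂_ext A` and `A = {v ∈ E : ∂v ⊆ B}`.
Then `|B| ≥ |A| + 1`; in particular `B` is strictly larger than `A`. -/
theorem deficiency_bound {d : ℕ} (hd : 1 ≤ d) (A B : Set (Fin d → ℤ))
    (hAfin : A.Finite) (hAne : A.Nonempty)
    (hAeven : ∀ a ∈ A, Even (∑ i, a i))
    (hBodd : ∀ b ∈ B, ¬ Even (∑ i, b i))
    (hB : B = extBdryZ A)
    (hA : A = {v | Even (∑ i, v i) ∧ ∀ u, adjZ v u → u ∈ B}) :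
    A.ncard + 1 ≤ B.ncard := by
  classical
  set i0 : Fin d := ⟨0, hd⟩ with hi0
  -- finiteness of neighbor sets
  have hnbr : ∀ x : Fin d → ℤ, ({y | adjZ y x} : Set (Fin d → ℤ)).Finite := by
    intro x
    have hsub : {y | adjZ y x} ⊆ (fun p : Fin d × Bool =>
        Function.update x p.1 (if p.2 then x p.1 - 1 else x p.1 + 1)) '' Set.univ := by
      rintro y ⟨i, hi, hj⟩
      rcases hi with h | h
      · refine ⟨(i, true), trivial, ?_⟩
        funext j
        show Function.update x i (x i - 1) j = y j
        by_cases hji : j = i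
        · subst hji; simp only [Function.update_self]; omega
        · rw [Function.update_of_ne hji]; exact hj j hji
      · refine ⟨(i, false), trivial, ?_⟩
        funext j
        show Function.update x i (x i + 1) j = y j
        by_cases hji : j = i
        · subst hji; simp only [Function.update_self]; omega
        · rw [Function.update_of_ne hji]; exact hj j hji
    exact (Set.finite_univ.image _).subset hsub
  have hBfin : B.Finite := by
    have hsub : B ⊆ ⋃ x ∈ A, {y | adjZ y x} := by
      intro b hb
      rw [hB] at hb
      obtain ⟨-, x, hx, hadj⟩ := hb
      exact Set.mem_biUnion hx hadj
    exact (hAfin.biUnion fun x _ => hnbr x).subset hsub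
  -- the shift vector
  let e0 : Fin d → ℤ := fun j => if j = i0 then 1 else 0
  have hsum_e0 : (∑ i, e0 i) = 1 := by
    simp [e0]
  have hadj_add : ∀ a : Fin d → ℤ, adjZ (a + e0) a := by
    intro a
    refine ⟨i0, Or.inr ?_, ?_⟩
    · simp [e0]
    · intro j hj; simp [e0, hj]
  have hadj_sub : ∀ a : Fin d → ℤ, adjZ (a - e0) a := by
    intro a
    refine ⟨i0, Or.inl ?_, ?_⟩
    · simp [e0]
    · intro j hj; simp [e0, hj]
  -- membership in B of odd neighbors of A
  have hmemB : ∀ a ∈ A, ∀ y : Fin d → ℤ, adjZ y a → ¬ Even (∑ i, y i) → y ∈ B := by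
    intro a ha y hady hodd
    rw [hB]
    exact ⟨fun hyA => hodd (hAeven y hyA), a, ha, hady⟩
  have haddB : ∀ a ∈ A, a + e0 ∈ B := by
    intro a ha
    refine hmemB a ha _ (hadj_add a) ?_
    have : (∑ i, (a + e0) i) = (∑ i, a i) + 1 := by
      simp [Finset.sum_add_distrib, hsum_e0]
    rw [this, Int.even_add_one]
    simpa using hAeven a ha
  have hsubB : ∀ a ∈ A, a - e0 ∈ B := by
    intro a ha
    refine hmemB a ha _ (hadj_sub a) ?_
    have : (∑ i, (a - e0) i) = (∑ i, a i) - 1 := by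
      simp [Finset.sum_sub_distrib, hsum_e0]
    rw [this, Int.even_sub_one]
    simpa using hAeven a ha
  -- minimal element in coordinate i0
  obtain ⟨a0, ha0, hmin⟩ := hAfin.toFinset.exists_min_image (fun v => v i0)
    (by simpa using hAne)
  have ha0A : a0 ∈ A := hAfin.mem_toFinset.mp ha0
  have hnot : a0 - e0 ∉ (· + e0) '' A := by
    rintro ⟨b, hbA, hbe⟩
    have hco := congrFun hbe i0
    have hb0 : b i0 + 1 = a0 i0 - 1 := by simpa [e0] using hco
    have h2 : a0 i0 ≤ b i0 := hmin b (hAfin.mem_toFinset.mpr hbA)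
    omega
  have hCsub : insert (a0 - e0) ((· + e0) '' A) ⊆ B := by
    rintro y (rfl | ⟨b, hbA, rfl⟩)
    · exact hsubB a0 ha0A
    · exact haddB b hbA
  have himg : ((· + e0) '' A).Finite := hAfin.image _
  calc A.ncard + 1 = (insert (a0 - e0) ((· + e0) '' A)).ncard := by
        rw [Set.ncard_insert_of_notMem hnot himg,
          Set.ncard_image_of_injective _ (add_left_injective e0)]
    _ ≤ B.ncard := Set.ncard_le_ncard hCsub hBfin
end
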